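/- Let n ≥ 3, let r be a real number with √2 < r ≤ √3, let Q = [0, 2n] × [0, 2r] ⊆ ℝ², and let W = {(2i−1, r) : i = 1, …, n} be the 1×n grid placement. Then for every real y with 0 < y < r, the single point p = (3, r + y) satisfies μ({q ∈ Q : dist(q, p) < infDist(q, W)}) = r²·y/2 − r·y²/2 + y³/8 + 2r − y. -/
import Mathlib

open MeasureTheory Metric Set
open scoped ENNReal

/-- The point `(x, y)` in the Euclidean plane. -/
noncomputable def pt (x y : ℝ) : EuclideanSpace ℝ (Fin 2) :=
  (WithLp.equiv 2 (Fin 2 → ℝ)).symm ![x, y]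

/-- The rectangular board `[0, 2n] × [0, 2r]`. -/
def bigBoard (n : ℕ) (r : ℝ) : Set (EuclideanSpace ℝ (Fin 2)) :=
  {q | q 0 ∈ Set.Icc (0:ℝ) (2 * n) ∧ q 1 ∈ Set.Icc (0:ℝ) (2 * r)}

lemma dist_pt_sq (q : EuclideanSpace ℝ (Fin 2)) (a b : ℝ) :
    dist q (pt a b) = Real.sqrt ((q 0 - a)^2 + (q 1 - b)^2) := by
  rw [EuclideanSpace.dist_eq]
  congr 1
  simp [Fin.sum_univ_two, Real.dist_eq, sq_abs]
  rfl

lemma dist_pt_lt_iff (q : EuclideanSpace ℝ (Fin 2)) (a b c d : ℝ) :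
    dist q (pt a b) < dist q (pt c d) ↔
      (q 0 - a)^2 + (q 1 - b)^2 < (q 0 - c)^2 + (q 1 - d)^2 := by
  rw [dist_pt_sq, dist_pt_sq, Real.sqrt_lt_sqrt_iff (by positivity)]

lemma integ_aux (c d a b : ℝ) (hab : a ≤ b) :
    ∫ t in Ioc a b, (c + d * t) = c * (b - a) + d * (b^2 - a^2) / 2 := by
  rw [← intervalIntegral.integral_of_le hab]
  have h1 : IntervalIntegrable (fun _ : ℝ => c) volume a b := intervalIntegrable_const
  have h2 : IntervalIntegrable (fun t : ℝ => d * t) volume a b := by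
    apply Continuous.intervalIntegrable; fun_prop
  rw [intervalIntegral.integral_add h1 h2, intervalIntegral.integral_const,
    intervalIntegral.integral_const_mul, integral_id]
  simp [smul_eq_mul]; ring

lemma vol_aux (r y : ℝ) (hy0 : 0 < y) (hy1 : y < r)
    (S : Set (EuclideanSpace ℝ (Fin 2)))
    (f g : ℝ → ℝ)
    (hf : f = fun t => 2 - y*(2*(t-r)-y)/4) (hg : g = fun t => 4 + y*(2*(t-r)-y)/4)
    (hS : S = (fun q : EuclideanSpace ℝ (Fin 2) => (q 0, q 1)) ⁻¹'
      (Prod.swap ⁻¹' regionBetween f g (Ioc (r + y/2) (2*r)))) :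
    volume S = ENNReal.ofReal (r ^ 2 * y / 2 - r * y ^ 2 / 2 + y ^ 3 / 8 + 2 * r - y) := by
  have hfc : Continuous f := by rw [hf]; fun_prop
  have hgc : Continuous g := by rw [hg]; fun_prop
  have hsm : MeasurableSet (Ioc (r + y/2) (2*r)) := measurableSet_Ioc
  have hR : MeasurableSet (regionBetween f g (Ioc (r + y/2) (2*r))) :=
    measurableSet_regionBetween hfc.measurable hgc.measurable hsm
  have h1 : MeasurePreserving (fun q : EuclideanSpace ℝ (Fin 2) => (q 0, q 1)) volume volume :=
    (volume_preserving_finTwoArrow ℝ).comp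
      (EuclideanSpace.volume_preserving_symm_measurableEquiv_toLp (Fin 2))
  have h2 : MeasurePreserving (Prod.swap : ℝ × ℝ → ℝ × ℝ) volume volume := by
    rw [Measure.volume_eq_prod]
    exact Measure.measurePreserving_swap
  have hab : r + y/2 ≤ 2*r := by nlinarith
  rw [hS, h1.measure_preimage ((hR.preimage measurable_swap).nullMeasurableSet),
    h2.measure_preimage hR.nullMeasurableSet, Measure.volume_eq_prod,
    volume_regionBetween_eq_integral (hfc.integrableOn_Ioc) (hgc.integrableOn_Ioc) hsm
      (by intro t ht; rw [hf, hg]; simp only; nlinarith [ht.1, ht.2, hy0.le])]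
  congr 1
  rw [setIntegral_congr_fun hsm (g := fun t => (2 - y*r - y^2/2) + y * t)
    (by intro t _; rw [hf, hg]; simp only [Pi.sub_apply]; ring), integ_aux _ _ _ _ hab]
  ring

set_option maxHeartbeats 1000000 in
lemma region_iff (n : ℕ) (hn : 3 ≤ n) (r y x t : ℝ)
    (hr0 : 0 < r) (hr3 : r ^ 2 ≤ 3) (hy0 : 0 < y) (hy1 : y < r) :
    (((0 ≤ x ∧ x ≤ 2*(n:ℝ)) ∧ (0 ≤ t ∧ t ≤ 2*r)) ∧
      (∀ i : Fin n, (x-3)^2+(t-(r+y))^2 < (x-(2*(i:ℝ)+1))^2+(t-r)^2))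
    ↔ ((r + y/2 < t ∧ t ≤ 2*r) ∧
      (2 - y*(2*(t-r)-y)/4 < x ∧ x < 4 + y*(2*(t-r)-y)/4)) := by
  have hn3 : (3:ℝ) ≤ (n:ℕ) := by exact_mod_cast hn
  constructor
  · rintro ⟨⟨⟨hx0, hx2n⟩, ⟨ht0, ht2r⟩⟩, hd⟩
    have h0 := hd ⟨0, by omega⟩
    have h1 := hd ⟨1, by omega⟩
    have h2 := hd ⟨2, by omega⟩
    have e0 : ((⟨0, by omega⟩ : Fin n) : ℝ) = 0 := by norm_num
    have e1 : ((⟨1, by omega⟩ : Fin n) : ℝ) = 1 := by norm_num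
    have e2 : ((⟨2, by omega⟩ : Fin n) : ℝ) = 2 := by norm_num
    rw [e0] at h0; rw [e1] at h1; rw [e2] at h2
    exact ⟨⟨by nlinarith [h1], ht2r⟩, by nlinarith [h0], by nlinarith [h2]⟩
  · rintro ⟨⟨ht1, ht2⟩, hfx, hgx⟩
    have hA0 : 0 < y*(2*(t-r)-y) := by nlinarith
    have hA3 : y*(2*(t-r)-y) ≤ 3 := by nlinarith
    refine ⟨⟨⟨by nlinarith, by nlinarith⟩, ⟨by nlinarith, ht2⟩⟩, ?_⟩
    intro i
    have hc : (2*(i:ℝ)+1 = 1) ∨ (2*(i:ℝ)+1 = 3) ∨ (2*(i:ℝ)+1 = 5) ∨ (7:ℝ) ≤ 2*(i:ℝ)+1 := by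
      have hk : (i:ℕ) = 0 ∨ (i:ℕ) = 1 ∨ (i:ℕ) = 2 ∨ 3 ≤ (i:ℕ) := by omega
      have he : ((i:ℕ) : ℝ) = (i:ℝ) := rfl
      rcases hk with h | h | h | h
      · left; rw [← he, h]; norm_num
      · right; left; rw [← he, h]; norm_num
      · right; right; left; rw [← he, h]; norm_num
      · right; right; right
        have : (3:ℝ) ≤ ((i:ℕ):ℝ) := by exact_mod_cast h
        rw [he] at this; linarith
    rcases hc with hc | hc | hc | hc
    · rw [hc]; nlinarith
    · rw [hc]; nlinarith
    · rw [hc]; nlinarith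
    · have hp1 : (0:ℝ) < 2*(i:ℝ)+1 - 3 := by linarith
      have hp2 : (0:ℝ) < 2*(i:ℝ)+1 + 3 - 2*x := by nlinarith
      nlinarith [mul_pos hp1 hp2]

theorem stmt_12 (n : ℕ) (hn : 3 ≤ n) (r : ℝ) (hr1 : Real.sqrt 2 < r) (hr2 : r ≤ Real.sqrt 3)
    (W : Set (EuclideanSpace ℝ (Fin 2)))
    (hW : W = Set.range fun i : Fin n => pt (2 * (i : ℝ) + 1) r)
    (y : ℝ) (hy0 : 0 < y) (hy1 : y < r)
    (p : EuclideanSpace ℝ (Fin 2)) (hp : p = pt 3 (r + y)) :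
    volume {q | q ∈ bigBoard n r ∧ dist q p < infDist q W} =
      ENNReal.ofReal (r ^ 2 * y / 2 - r * y ^ 2 / 2 + y ^ 3 / 8 + 2 * r - y) := by
  subst hp
  have hr0 : (0:ℝ) < r := lt_trans (by positivity) hr1
  have hr3 : r ^ 2 ≤ 3 := by
    have := Real.sq_sqrt (by norm_num : (3:ℝ) ≥ 0)
    nlinarith [Real.sqrt_nonneg 3]
  set w : Fin n → EuclideanSpace ℝ (Fin 2) := fun i => pt (2 * (i : ℝ) + 1) r with hw
  have hWr : W = Set.range w := hW
  have hne : W.Nonempty := by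
    rw [hWr]; exact ⟨w ⟨0, by omega⟩, mem_range_self _⟩
  have hcpt : IsCompact W := by rw [hWr]; exact (Set.finite_range w).isCompact
  have key : ∀ q : EuclideanSpace ℝ (Fin 2),
      dist q (pt 3 (r + y)) < infDist q W ↔ ∀ i, dist q (pt 3 (r + y)) < dist q (w i) := by
    intro q
    constructor
    · intro h i
      exact lt_of_lt_of_le h (infDist_le_dist_of_mem (by rw [hWr]; exact mem_range_self i))
    · intro h
      obtain ⟨w₀, hw₀, heq⟩ := hcpt.exists_infDist_eq_dist hne q
      rw [heq]
      rw [hWr] at hw₀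
      obtain ⟨i, rfl⟩ := hw₀
      exact h i
  set f : ℝ → ℝ := fun t => 2 - y*(2*(t-r)-y)/4 with hfdef
  set g : ℝ → ℝ := fun t => 4 + y*(2*(t-r)-y)/4 with hgdef
  have hseteq : {q : EuclideanSpace ℝ (Fin 2) | q ∈ bigBoard n r ∧
      dist q (pt 3 (r + y)) < infDist q W} =
      (fun q : EuclideanSpace ℝ (Fin 2) => (q 0, q 1)) ⁻¹'
        (Prod.swap ⁻¹' regionBetween f g (Ioc (r + y/2) (2*r))) := by
    ext q
    have hdi : ∀ i : Fin n, (dist q (pt 3 (r+y)) < dist q (w i) ↔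
        (q 0 - 3)^2 + (q 1 - (r+y))^2 < (q 0 - (2*(i:ℝ)+1))^2 + (q 1 - r)^2) := by
      intro i; exact dist_pt_lt_iff q 3 (r+y) (2*(i:ℝ)+1) r
    simp only [mem_setOf_eq, mem_preimage, regionBetween, Prod.swap_prod_mk, mem_Ioc, mem_Ioo,
      bigBoard, mem_Icc, key, hdi, hfdef, hgdef]
    exact region_iff n hn r y (q 0) (q 1) hr0 hr3 hy0 hy1
  rw [hseteq]
  exact vol_aux r y hy0 hy1 _ f g hfdef hgdef rfl
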